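/- Let F > 0 and ξ = (ξ₁,ξ₂,ξ₃) ∈ ℝ³ with ξ ≠ 0, and let 𝒜(ξ) be the complex 4×4 matrix with rows: row 1 = ( ξ₁ξ₂/|ξ|², (ξ₂²+ξ₃²)/|ξ|², 0, ξ₁ξ₃/(F|ξ|²) ); row 2 = ( −(ξ₁²+ξ₃²)/|ξ|², −ξ₁ξ₂/|ξ|², 0, ξ₂ξ₃/(F|ξ|²) ); row 3 = ( ξ₂ξ₃/|ξ|², −ξ₁ξ₃/|ξ|², 0, −(ξ₁²+ξ₂²)/(F|ξ|²) ); row 4 = ( 0, 0, 1/F, 0 ). Then i·p_F(ξ) and −i·p_F(ξ) are eigenvalues of 𝒜(ξ), where p_F(ξ) = |ξ|_F/(F|ξ|). -/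

import Mathlib

/-! The characteristic polynomial of the symbol is `λ² (λ² + p_F(ξ)²)`: a cofactor expansion,
after which the identity `ξ₁² + ξ₂² + ξ₃² = |ξ|²` cancels everything else. Hence `±i p_F(ξ)` are
roots, and a root of `det (𝒜 - λ)` has a kernel vector of `𝒜 - λ`. -/

open Complex Matrix

noncomputable section

/-- The dispersion relation `p_F(ξ) = |ξ|_F / (F |ξ|)`. -/
def pF (F : ℝ) (ξ : EuclideanSpace ℝ (Fin 3)) : ℝ :=
  Real.sqrt ((ξ 0) ^ 2 + (ξ 1) ^ 2 + (F * ξ 2) ^ 2) / (F * ‖ξ‖)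

/-- The Fourier symbol of the linearized primitive system. -/
def primitiveSymbol (F : ℝ) (ξ : EuclideanSpace ℝ (Fin 3)) : Matrix (Fin 4) (Fin 4) ℂ :=
  !![((ξ 0 * ξ 1 / ‖ξ‖ ^ 2 : ℝ) : ℂ), (((ξ 1 ^ 2 + ξ 2 ^ 2) / ‖ξ‖ ^ 2 : ℝ) : ℂ), 0,
      ((ξ 0 * ξ 2 / (F * ‖ξ‖ ^ 2) : ℝ) : ℂ);
    ((-((ξ 0 ^ 2 + ξ 2 ^ 2) / ‖ξ‖ ^ 2) : ℝ) : ℂ), ((-(ξ 0 * ξ 1 / ‖ξ‖ ^ 2) : ℝ) : ℂ), 0,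
      ((ξ 1 * ξ 2 / (F * ‖ξ‖ ^ 2) : ℝ) : ℂ);
    ((ξ 1 * ξ 2 / ‖ξ‖ ^ 2 : ℝ) : ℂ), ((-(ξ 0 * ξ 2 / ‖ξ‖ ^ 2) : ℝ) : ℂ), 0,
      ((-((ξ 0 ^ 2 + ξ 1 ^ 2) / (F * ‖ξ‖ ^ 2)) : ℝ) : ℂ);
    0, 0, ((1 / F : ℝ) : ℂ), 0]

theorem Matrix.exists_mulVec_eq_smul_of_det_sub_eq_zero {n K : Type*} [Fintype n] [DecidableEq n]
    [Field K] {M : Matrix n n K} {l : K} (h : (M - l • 1).det = 0) :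
    ∃ X : n → K, X ≠ 0 ∧ M *ᵥ X = l • X := by
  obtain ⟨X, hX, hMX⟩ := exists_mulVec_eq_zero_iff.mpr h
  rw [sub_mulVec, smul_mulVec, one_mulVec, sub_eq_zero] at hMX
  exact ⟨X, hX, hMX⟩

theorem EuclideanSpace.norm_sq_eq_fin_three (ξ : EuclideanSpace ℝ (Fin 3)) :
    ‖ξ‖ ^ 2 = ξ 0 ^ 2 + ξ 1 ^ 2 + ξ 2 ^ 2 := by
  simp [EuclideanSpace.real_norm_sq_eq, Fin.sum_univ_three]

def symbolMatrix {K : Type*} [Field K] (a b c F s : K) : Matrix (Fin 4) (Fin 4) K :=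
  !![a * b / s, (b ^ 2 + c ^ 2) / s, 0, a * c / (F * s);
    -((a ^ 2 + c ^ 2) / s), -(a * b / s), 0, b * c / (F * s);
    b * c / s, -(a * c / s), 0, -((a ^ 2 + b ^ 2) / (F * s));
    0, 0, 1 / F, 0]

theorem det_symbolMatrix_sub_smul {K : Type*} [Field K] (a b c F l : K) (hF : F ≠ 0)
    (hs : a ^ 2 + b ^ 2 + c ^ 2 ≠ 0) :
    (symbolMatrix a b c F (a ^ 2 + b ^ 2 + c ^ 2) - l • 1).det =
      l ^ 2 * (l ^ 2 + (a ^ 2 + b ^ 2 + (F * c) ^ 2) / (F ^ 2 * (a ^ 2 + b ^ 2 + c ^ 2))) := by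
  simp [det_succ_row_zero, Fin.sum_univ_succ, symbolMatrix, Fin.succAbove, one_apply]
  field

theorem primitiveSymbol_eq_symbolMatrix (F : ℝ) (ξ : EuclideanSpace ℝ (Fin 3)) :
    primitiveSymbol F ξ =
      symbolMatrix (ξ 0 : ℂ) (ξ 1) (ξ 2) F ((ξ 0 : ℂ) ^ 2 + (ξ 1 : ℂ) ^ 2 + (ξ 2 : ℂ) ^ 2) := by
  ext i j
  fin_cases i <;> fin_cases j <;>
    simp [primitiveSymbol, symbolMatrix, EuclideanSpace.norm_sq_eq_fin_three]

theorem pF_sq (F : ℝ) (ξ : EuclideanSpace ℝ (Fin 3)) :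
    pF F ξ ^ 2 = (ξ 0 ^ 2 + ξ 1 ^ 2 + (F * ξ 2) ^ 2) / (F ^ 2 * ‖ξ‖ ^ 2) := by
  rw [pF, div_pow, Real.sq_sqrt (by positivity), mul_pow F ‖ξ‖]

theorem det_primitiveSymbol_sub_smul {F : ℝ} (hF : F ≠ 0) {ξ : EuclideanSpace ℝ (Fin 3)}
    (hξ : ξ ≠ 0) (l : ℂ) :
    (primitiveSymbol F ξ - l • 1).det = l ^ 2 * (l ^ 2 + (pF F ξ : ℂ) ^ 2) := by
  have hnorm := EuclideanSpace.norm_sq_eq_fin_three ξ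
  have hs : (ξ 0 : ℂ) ^ 2 + (ξ 1 : ℂ) ^ 2 + (ξ 2 : ℂ) ^ 2 ≠ 0 := by
    exact_mod_cast hnorm ▸ pow_ne_zero 2 (norm_ne_zero_iff.mpr hξ)
  have hp : (pF F ξ : ℂ) ^ 2 = ((ξ 0 : ℂ) ^ 2 + (ξ 1 : ℂ) ^ 2 + (F * (ξ 2 : ℂ)) ^ 2) /
      (F ^ 2 * ((ξ 0 : ℂ) ^ 2 + (ξ 1 : ℂ) ^ 2 + (ξ 2 : ℂ) ^ 2)) := by
    rw [← ofReal_pow, pF_sq, hnorm]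
    push_cast
    ring
  rw [primitiveSymbol_eq_symbolMatrix, det_symbolMatrix_sub_smul _ _ _ _ _ (mod_cast hF) hs, hp]

theorem eigenvalues_primitive_symbol (F : ℝ) (hF : 0 < F)
    (ξ : EuclideanSpace ℝ (Fin 3)) (hξ : ξ ≠ 0) :
    (∃ X : Fin 4 → ℂ, X ≠ 0 ∧
        (primitiveSymbol F ξ).mulVec X = (Complex.I * ((pF F ξ : ℝ) : ℂ)) • X) ∧
      (∃ X : Fin 4 → ℂ, X ≠ 0 ∧
        (primitiveSymbol F ξ).mulVec X = (-(Complex.I * ((pF F ξ : ℝ) : ℂ))) • X) := by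
  have hdet (l : ℂ) (hl : l ^ 2 = -(pF F ξ : ℂ) ^ 2) : (primitiveSymbol F ξ - l • 1).det = 0 := by
    rw [det_primitiveSymbol_sub_smul hF.ne' hξ, hl, neg_add_cancel, mul_zero]
  constructor <;> refine exists_mulVec_eq_smul_of_det_sub_eq_zero (hdet _ ?_)
  · rw [mul_pow, I_sq, neg_one_mul]
  · rw [neg_sq, mul_pow, I_sq, neg_one_mul]

end
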